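/- arXiv:2602.16244 — 2 statements merged into one kernel-verified Lean document; each statement's English description precedes it below -/
import Mathlib

section
/- Let d_k(x) = (x - a_k)^2 + c_k for k = 1,...,K with a_k ∈ [0, D] and c_k > 0, and let d(x) = max_k d_k(x). Then d attains its minimum over [0, D] at some point of the finite set G = {0, D} ∪ {a_1,...,a_K} ∪ {ξ_{ij} : i < j, a_i ≠ a_j}, where ξ_{ij} = (c_j - c_i)/(2(a_j - a_i)) + (a_i + a_j)/2 is the unique solution of d_i(x) = d_j(x). -/
/-- The minimizer over `[0, D]` of `d(x) = max_k ((x - a_k)^2 + c_k)` lies in the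
finite candidate set consisting of the endpoints `0, D`, the points `a_k`, and the
pairwise equal-distance points `ξ_{ij}`. -/
theorem stmt_1 (K : ℕ) (hK : 0 < K) (D : ℝ) (hD : 0 ≤ D)
    (a c : Fin K → ℝ) (ha : ∀ k, a k ∈ Set.Icc 0 D) (hc : ∀ k, 0 < c k) :
    ∃ x ∈ Set.Icc (0 : ℝ) D,
      x ∈ ({0, D} ∪ Set.range a ∪
            {ξ : ℝ | ∃ i j : Fin K, i < j ∧ a i ≠ a j ∧
              ξ = (c j - c i) / (2 * (a j - a i)) + (a i + a j) / 2}) ∧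
      ∀ y ∈ Set.Icc (0 : ℝ) D,
        Finset.univ.sup' (Finset.univ_nonempty_iff.mpr (Fin.pos_iff_nonempty.mp hK))
            (fun k : Fin K => (x - a k) ^ 2 + c k) ≤
          Finset.univ.sup' (Finset.univ_nonempty_iff.mpr (Fin.pos_iff_nonempty.mp hK))
            (fun k : Fin K => (y - a k) ^ 2 + c k) := by
  have hne : (Finset.univ : Finset (Fin K)).Nonempty :=
    Finset.univ_nonempty_iff.mpr (Fin.pos_iff_nonempty.mp hK)
  set f : ℝ → ℝ := fun x => Finset.univ.sup' hne (fun k => (x - a k) ^ 2 + c k) with hfdef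
  have hcont : Continuous f := by
    apply Continuous.finset_sup'_apply hne
    intro i _
    exact ((continuous_id.sub continuous_const).pow 2).add continuous_const
  obtain ⟨x, hxI, hmin⟩ := isCompact_Icc.exists_isMinOn
    ⟨0, Set.left_mem_Icc.mpr hD⟩ hcont.continuousOn
  have hmin' : ∀ y ∈ Set.Icc (0:ℝ) D, f x ≤ f y := fun y hy => hmin hy
  refine ⟨x, hxI, ?_, hmin'⟩
  set M := f x with hM
  obtain ⟨k0, -, hk0⟩ := Finset.exists_mem_eq_sup' hne (fun k => (x - a k) ^ 2 + c k)
  -- hk0 : M = (x - a k0)^2 + c k0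
  by_cases hx0 : x = 0
  · exact Or.inl (Or.inl (Or.inl hx0))
  by_cases hxD : x = D
  · exact Or.inl (Or.inl (Or.inr hxD))
  by_cases hA : ∃ k, (x - a k) ^ 2 + c k = M ∧ a k = x
  · obtain ⟨k, -, hk⟩ := hA
    exact Or.inl (Or.inr ⟨k, hk⟩)
  by_cases hB : ∃ i j, (x - a i) ^ 2 + c i = M ∧ (x - a j) ^ 2 + c j = M ∧ a i ≠ a j
  · obtain ⟨i, j, hi, hj, hij⟩ := hB
    have hinej : i ≠ j := fun h => hij (by rw [h])
    have key : ∀ p q : Fin K, (x - a p) ^ 2 + c p = M → (x - a q) ^ 2 + c q = M →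
        a p ≠ a q → x = (c q - c p) / (2 * (a q - a p)) + (a p + a q) / 2 := by
      intro p q hp hq hpq
      have hd : a q - a p ≠ 0 := sub_ne_zero.mpr (Ne.symm hpq)
      have heq : (x - a p) ^ 2 + c p = (x - a q) ^ 2 + c q := by rw [hp, hq]
      field_simp
      ring_nf
      ring_nf at heq
      nlinarith [heq]
    rcases lt_or_gt_of_ne hinej with h | h
    · exact Or.inr ⟨i, j, h, hij, key i j hi hj hij⟩
    · exact Or.inr ⟨j, i, h, hij.symm, key j i hj hi hij.symm⟩
  -- remaining case: all active indices share the same a-value b ≠ x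
  exfalso
  push_neg at hA hB
  set b := a k0 with hbdef
  have hbx : b ≠ x := hA k0 hk0.symm
  have hact : ∀ k, (x - a k) ^ 2 + c k = M → a k = b :=
    fun k hk => hB k k0 hk hk0.symm
  -- perturb towards b
  have hptIcc : ∀ t ∈ Set.Icc (0:ℝ) 1, x + t • (b - x) ∈ Set.Icc (0:ℝ) D :=
    fun t ht => (convex_Icc (0:ℝ) D).add_smul_sub_mem hxI (ha k0) ht
  have hev : ∀ k : Fin K, ∀ᶠ t in nhdsWithin (0:ℝ) (Set.Ioi 0),
      (x + t * (b - x) - a k) ^ 2 + c k < M := by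
    intro k
    by_cases hk : (x - a k) ^ 2 + c k = M
    · have hak : a k = b := hact k hk
      have hIoo : Set.Ioo (0:ℝ) 1 ∈ nhdsWithin (0:ℝ) (Set.Ioi 0) :=
        Ioo_mem_nhdsGT_of_mem ⟨le_refl 0, zero_lt_one⟩
      filter_upwards [hIoo] with t ht
      have h1 : x + t * (b - x) - a k = (1 - t) * (x - b) := by rw [hak]; ring
      rw [h1, ← hk, hak]
      have h2 : ((1 - t) * (x - b)) ^ 2 < (x - b) ^ 2 := by
        have hxb0 : (x - b) ^ 2 > 0 := by
          have := sub_ne_zero.mpr (Ne.symm hbx)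
          positivity
        have ht1 : (1 - t) ^ 2 < 1 := by nlinarith [ht.1, ht.2]
        calc ((1 - t) * (x - b)) ^ 2 = (1 - t) ^ 2 * (x - b) ^ 2 := by ring
        _ < 1 * (x - b) ^ 2 := by exact mul_lt_mul_of_pos_right ht1 hxb0
        _ = (x - b) ^ 2 := by ring
      linarith
    · have hlt : (x - a k) ^ 2 + c k < M := by
        have hle : (x - a k) ^ 2 + c k ≤ M :=
          Finset.le_sup' (fun k => (x - a k) ^ 2 + c k) (Finset.mem_univ k)
        exact lt_of_le_of_ne hle hk
      have hct : Filter.Tendsto (fun t : ℝ => (x + t * (b - x) - a k) ^ 2 + c k)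
          (nhdsWithin 0 (Set.Ioi 0)) (nhds ((x - a k) ^ 2 + c k)) := by
        have : Continuous (fun t : ℝ => (x + t * (b - x) - a k) ^ 2 + c k) :=
          ((((continuous_const.add (continuous_id.mul continuous_const)).sub
            continuous_const).pow 2).add continuous_const)
        have h0 := this.tendsto 0
        simp only [zero_mul, add_zero] at h0
        exact h0.mono_left nhdsWithin_le_nhds
      exact hct.eventually_lt_const hlt
  have hall : ∀ᶠ t in nhdsWithin (0:ℝ) (Set.Ioi 0),
      ∀ k : Fin K, (x + t * (b - x) - a k) ^ 2 + c k < M :=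
    Filter.eventually_all.mpr hev
  have hIoo : Set.Ioo (0:ℝ) 1 ∈ nhdsWithin (0:ℝ) (Set.Ioi 0) :=
    Ioo_mem_nhdsGT_of_mem ⟨le_refl 0, zero_lt_one⟩
  obtain ⟨t, ht, htI⟩ := (hall.and (Filter.eventually_of_mem hIoo (fun _ h => h))).exists
  have hmem : x + t * (b - x) ∈ Set.Icc (0:ℝ) D := by
    have := hptIcc t ⟨le_of_lt htI.1, le_of_lt htI.2⟩
    simpa [smul_eq_mul] using this
  have hflt : f (x + t * (b - x)) < M := by
    rw [hfdef]
    exact (Finset.sup'_lt_iff hne).mpr (fun k _ => ht k)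
  exact absurd (hmin' _ hmem) (not_le.mpr hflt)
end

section
/- Fix Δ > m > 0 and define, for ε ∈ [0, m], h(ε) = ((m+ε)² + Δ²)·((m-ε)² + Δ²). Then h(ε) = (m² + Δ²)² + 2(Δ² - m²)ε² + ε⁴, h is strictly increasing on (0, m], and h attains its unique minimum over [0, m] at ε = 0. -/
/-- For `Δ > m > 0` and `h(ε) = ((m+ε)² + Δ²)((m-ε)² + Δ²)` on `[0, m]`:
the expansion `h(ε) = (m²+Δ²)² + 2(Δ²-m²)ε² + ε⁴` holds, `h` is strictly
increasing on `(0, m]`, and `h` attains its unique minimum over `[0, m]` at `ε = 0`. -/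
theorem stmt_6 (m Δ : ℝ) (hm : 0 < m) (hΔ : m < Δ) :
    (∀ ε : ℝ, ((m + ε) ^ 2 + Δ ^ 2) * ((m - ε) ^ 2 + Δ ^ 2) =
        (m ^ 2 + Δ ^ 2) ^ 2 + 2 * (Δ ^ 2 - m ^ 2) * ε ^ 2 + ε ^ 4) ∧
    StrictMonoOn (fun ε : ℝ => ((m + ε) ^ 2 + Δ ^ 2) * ((m - ε) ^ 2 + Δ ^ 2))
      (Set.Ioc 0 m) ∧
    (∀ ε ∈ Set.Icc (0 : ℝ) m, ε ≠ 0 →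
      ((m + 0) ^ 2 + Δ ^ 2) * ((m - 0) ^ 2 + Δ ^ 2) <
        ((m + ε) ^ 2 + Δ ^ 2) * ((m - ε) ^ 2 + Δ ^ 2)) := by
  refine ⟨fun ε => by ring, ?_, ?_⟩
  · intro a ha b hb hab
    simp only
    have hba : (0:ℝ) < b ^ 2 - a ^ 2 := by nlinarith [ha.1, hb.1]
    have hΔm : (0:ℝ) < Δ ^ 2 - m ^ 2 := by nlinarith
    nlinarith [mul_pos hΔm hba, mul_nonneg hba.le (by positivity : (0:ℝ) ≤ a ^ 2 + b ^ 2)]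
  · intro ε hε hne
    have h0 : 0 < ε := lt_of_le_of_ne hε.1 (Ne.symm hne)
    have hΔm : (0:ℝ) < Δ ^ 2 - m ^ 2 := by nlinarith
    nlinarith [mul_pos hΔm (pow_pos h0 2), pow_pos h0 4]
end
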